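/- arXiv:2207.05284 — 4 statements merged into one kernel-verified Lean document; each statement's English description precedes it below -/
import Mathlib

section
/- Let H be a symmetric positive definite N×N real matrix and let e : ℝ → ℝ^N be continuously differentiable with ė(t) = -H e(t) - D(t)·sgn(H e(t)) - w(t)·𝟙, where each diagonal entry dᵢ(t) of D(t) satisfies dᵢ(t) ≥ β for a constant β, and |w(t)| ≤ w̄ ≤ β for all t. Then the function V(t) = (1/2) e(t)ᵀ H e(t) is non-increasing in t. -/
open Matrix Set

/-- adaptive-sign observer error dynamics: V(t) = (1/2) e(t)ᵀ H e(t)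
is non-increasing. -/
theorem stmt0 {N : ℕ} (H : Matrix (Fin N) (Fin N) ℝ)
    (hHsymm : H.IsSymm) (hHpd : H.PosDef)
    (e : ℝ → Fin N → ℝ) (D : ℝ → Fin N → ℝ) (w : ℝ → ℝ)
    (β wbar : ℝ) (hβ : ∀ t i, β ≤ D t i) (hw : ∀ t, |w t| ≤ wbar) (hwbarβ : wbar ≤ β)
    (hdyn : ∀ t i, HasDerivAt (fun s => e s i)
      (-(H *ᵥ e t) i - D t i * Real.sign ((H *ᵥ e t) i) - w t) t) :
    Antitone (fun t => (1 / 2 : ℝ) * (e t ⬝ᵥ (H *ᵥ e t))) := by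
  set e' : ℝ → Fin N → ℝ := fun t i =>
    -(H *ᵥ e t) i - D t i * Real.sign ((H *ᵥ e t) i) - w t with he'
  have key : ∀ t, HasDerivAt (fun s => (1 / 2 : ℝ) * (e s ⬝ᵥ (H *ᵥ e s)))
      (e' t ⬝ᵥ (H *ᵥ e t)) t := by
    intro t
    have h1 : HasDerivAt (fun s => e s ⬝ᵥ (H *ᵥ e s))
        (∑ i, (e' t i * (H *ᵥ e t) i + e t i * ∑ j, H i j * e' t j)) t := by
      have : HasDerivAt (fun s => ∑ i, e s i * ∑ j, H i j * e s j)
          (∑ i, (e' t i * (∑ j, H i j * e t j) + e t i * ∑ j, H i j * e' t j)) t := by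
        apply HasDerivAt.fun_sum
        intro i _
        exact (hdyn t i).mul (HasDerivAt.fun_sum fun j _ => (hdyn t j).const_mul (H i j))
      simpa [dotProduct, mulVec, dotProduct] using this
    have hsymm : ∑ i, e t i * ∑ j, H i j * e' t j = e' t ⬝ᵥ (H *ᵥ e t) := by
      simp only [dotProduct, mulVec, Finset.mul_sum]
      rw [Finset.sum_comm]
      refine Finset.sum_congr rfl fun j _ => Finset.sum_congr rfl fun i _ => ?_
      have hij : H i j = H j i := by
        conv_lhs => rw [← hHsymm]
        rfl
      rw [hij]; ring
    have h2 : (∑ i, (e' t i * (H *ᵥ e t) i + e t i * ∑ j, H i j * e' t j))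
        = 2 * (e' t ⬝ᵥ (H *ᵥ e t)) := by
      rw [Finset.sum_add_distrib, hsymm]
      simp only [dotProduct]
      ring
    have := h1.const_mul (1 / 2 : ℝ)
    rw [h2] at this
    convert this using 1
    all_goals first | rfl | ring
  have hderiv_nonpos : ∀ t, e' t ⬝ᵥ (H *ᵥ e t) ≤ 0 := by
    intro t
    have hterm : ∀ i, e' t i * (H *ᵥ e t) i ≤ 0 := by
      intro i
      set x := (H *ᵥ e t) i with hx
      have hsx : Real.sign x * x = |x| := by
        rcases lt_trichotomy x 0 with h | h | h
        · rw [Real.sign_of_neg h, abs_of_neg h]; ring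
        · simp [h]
        · rw [Real.sign_of_pos h, abs_of_pos h]; ring
      have hDi : β * |x| ≤ D t i * |x| :=
        mul_le_mul_of_nonneg_right (hβ t i) (abs_nonneg _)
      have hwx : -(w t * x) ≤ wbar * |x| := by
        calc -(w t * x) ≤ |w t * x| := neg_le_abs _
          _ = |w t| * |x| := abs_mul _ _
          _ ≤ wbar * |x| := mul_le_mul_of_nonneg_right (hw t) (abs_nonneg _)
      have : e' t i * x = -x ^ 2 - D t i * (Real.sign x * x) - w t * x := by
        simp only [he']; ring
      rw [this, hsx]
      have hx2 : (0:ℝ) ≤ x ^ 2 := sq_nonneg x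
      nlinarith [mul_le_mul_of_nonneg_right hwbarβ (abs_nonneg x)]
    calc e' t ⬝ᵥ (H *ᵥ e t) = ∑ i, e' t i * (H *ᵥ e t) i := rfl
      _ ≤ 0 := Finset.sum_nonpos fun i _ => hterm i
  apply antitone_of_deriv_nonpos
  · exact fun t => (key t).differentiableAt
  · intro t
    rw [(key t).deriv]
    exact hderiv_nonpos t
end

section
/- Let H ∈ ℝ^{N×N} be symmetric positive definite with eigenvalues λ₁,…,λ_N, and for constants c₂,…,c_l > 0 and l ≥ 3 define the N(l−1)×N(l−1) block matrix F₁ whose first block column is (−c₂H, −c₃c₂H, …, −c_l c₂H)ᵀ and whose superdiagonal blocks (in positions (m, m+1) for m = 1,…,l−2) are the identity I_N, all other blocks zero. Then the characteristic polynomial of F₁ equals ∏_{i=1}^{N} h_i(s), where h_i(s) = s^{l−1} + c₂ λ_i s^{l−2} + c₂ λ_i ∑_{z=0}^{l−3} c_{l−z} s^{z}. -/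
open Matrix Polynomial Finset Kronecker

variable {R : Type*} [CommRing R]


/-- companion-type matrix: first column `-a`, superdiagonal ones. -/
def compM (n : ℕ) (a : Fin n → R) : Matrix (Fin n) (Fin n) R :=
  Matrix.of fun i j => if j.val = 0 then -a i else if j.val = i.val + 1 then 1 else 0

theorem compM_charpoly : ∀ (n : ℕ) (a : Fin (n+1) → R),
    (compM (n+1) a).charpoly = X^(n+1) + ∑ i : Fin (n+1), C (a i) * X^(n - i.val) := by
  intro n
  induction n with
  | zero =>
    intro a
    rw [Matrix.charpoly, Matrix.det_fin_one]
    simp [charmatrix_apply, compM]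
  | succ n ih =>
    intro a
    -- the lower-left minor is lower triangular with diagonal -1
    have hminor0 : det ((charmatrix (compM (n+2) a)).submatrix
        (Fin.last (n+1)).succAbove ((0 : Fin (n+2)).succAbove)) = (-1)^(n+1) := by
      rw [Matrix.det_of_lowerTriangular]
      · rw [Fin.succAbove_last]
        have : ∀ r : Fin (n+1), (charmatrix (compM (n+2) a)).submatrix
            Fin.castSucc ((0 : Fin (n+2)).succAbove) r r = -1 := by
          intro r
          simp [charmatrix_apply, compM, Fin.succAbove, diagonal_apply,
            Fin.lt_def]
          intro h; exact absurd (congrArg Fin.val h) (by simp)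
        simp only [this]
        simp
      · intro r s hrs
        have hlt : r < s := hrs
        have hlt' : r.val < s.val := hlt
        simp only [submatrix_apply, Fin.succAbove_last, Fin.succAbove_zero, charmatrix_apply,
          diagonal_apply, compM, of_apply, Fin.ext_iff, Fin.coe_castSucc, Fin.val_succ]
        rw [if_neg (by omega), if_neg (by omega), if_neg (by omega)]
        simp
    -- the principal minor is the charmatrix of the smaller companion matrix
    have hminor1 : (charmatrix (compM (n+2) a)).submatrix
        (Fin.last (n+1)).succAbove ((Fin.last (n+1)).succAbove) =
        charmatrix (compM (n+1) (a ∘ Fin.castSucc)) := by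
      ext r s
      rw [Fin.succAbove_last]
      simp [charmatrix_apply, compM, diagonal_apply]
    rw [Matrix.charpoly, Matrix.det_succ_row _ (Fin.last (n+1))]
    have hterm : ∀ j : Fin (n+2),
        (-1 : R[X]) ^ ((Fin.last (n+1) : Fin (n+2)) + j : ℕ) *
            charmatrix (compM (n+2) a) (Fin.last (n+1)) j *
            det ((charmatrix (compM (n+2) a)).submatrix
              (Fin.last (n+1)).succAbove j.succAbove) =
          (if j = 0 then C (a (Fin.last (n+1))) else 0) +
          (if j = Fin.last (n+1) then
            X * det ((charmatrix (compM (n+2) a)).submatrix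
              (Fin.last (n+1)).succAbove ((Fin.last (n+1)).succAbove)) else 0) := by
      intro j
      rcases eq_or_ne j 0 with rfl | hj0
      · have hne : (0 : Fin (n+2)) ≠ Fin.last (n+1) := by
          simp [Fin.ext_iff]
        rw [if_pos rfl, if_neg hne, hminor0]
        have hentry : charmatrix (compM (n+2) a) (Fin.last (n+1)) 0
            = C (a (Fin.last (n+1))) := by
          simp [charmatrix_apply, compM, diagonal_apply]
        rw [hentry]
        have hpow : (-1 : R[X]) ^ (((Fin.last (n+1) : Fin (n+2)) : ℕ) + ((0 : Fin (n+2)) : ℕ))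
            = (-1)^(n+1) := by simp [Fin.last]
        rw [hpow]
        have h2 : ((-1 : R[X])^(n+1)) * ((-1 : R[X])^(n+1)) = 1 := by
          rw [← pow_add, ← two_mul, pow_mul]; norm_num
        linear_combination (C (a (Fin.last (n+1)))) * h2
      rcases eq_or_ne j (Fin.last (n+1)) with rfl | hjl
      · rw [if_neg hj0, if_pos rfl]
        have hentry : charmatrix (compM (n+2) a) (Fin.last (n+1)) (Fin.last (n+1)) = X := by
          have : ¬ ((Fin.last (n+1)).val = 0) := by simp [Fin.ext_iff]
          simp [charmatrix_apply, compM, diagonal_apply]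
        rw [hentry]
        have : ((Fin.last (n+1) : Fin (n+2)) + Fin.last (n+1) : ℕ) = 2 * (n+1) := by
          simp [Fin.last]; ring
        rw [this, pow_mul]
        simp
      · rw [if_neg hj0, if_neg hjl]
        have hentry : charmatrix (compM (n+2) a) (Fin.last (n+1)) j = 0 := by
          have h0 : ¬ (j.val = 0) := fun h => hj0 (Fin.ext h)
          have hl : ¬ ((Fin.last (n+1) : Fin (n+2)) = j) := fun h => hjl h.symm
          have h1 : ¬ (j.val = (Fin.last (n+1) : Fin (n+2)).val + 1) := by
            have := j.isLt; simp [Fin.last]; omega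
          simp [charmatrix_apply, compM, diagonal_apply, h0, h1, hl]
          rw [if_neg hj0, if_neg (by have := j.isLt; omega)]
        rw [hentry]
        ring
    rw [Finset.sum_congr rfl fun j _ => hterm j, Finset.sum_add_distrib,
      Finset.sum_ite_eq' univ (0 : Fin (n+2)), Finset.sum_ite_eq' univ (Fin.last (n+1))]
    rw [hminor1]
    have ihd : det (charmatrix (compM (n+1) (a ∘ Fin.castSucc)))
        = X^(n+1) + ∑ i : Fin (n+1), C (a (Fin.castSucc i)) * X^(n - i.val) := ih _
    rw [ihd]
    simp only [mem_univ, if_true]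
    rw [Fin.sum_univ_castSucc (f := fun i : Fin (n+2) => C (a i) * X ^ (n + 1 - i.val))]
    have hlast : C (a (Fin.last (n+1))) * X ^ (n + 1 - (Fin.last (n+1)).val)
        = C (a (Fin.last (n+1))) := by simp [Fin.last]
    rw [hlast]
    rw [mul_add, Finset.mul_sum]
    have hsum : ∀ i : Fin (n+1), X * (C (a (Fin.castSucc i)) * X ^ (n - i.val))
        = C (a (Fin.castSucc i)) * X ^ (n + 1 - (Fin.castSucc i).val) := by
      intro i
      have : n + 1 - (Fin.castSucc i).val = (n - i.val) + 1 := by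
        have := i.isLt; simp [Fin.castSucc]; omega
      rw [this, pow_succ]; ring
    rw [Finset.sum_congr rfl fun i _ => hsum i]
    ring



lemma charmatrix_blockDiagonal' {m o : Type*} [DecidableEq m] [Fintype m] [DecidableEq o]
    [Fintype o] (M : o → Matrix m m R) :
    charmatrix (blockDiagonal M) = blockDiagonal (fun k => charmatrix (M k)) := by
  ext ⟨i, k⟩ ⟨j, k'⟩
  rcases eq_or_ne k k' with rfl | h
  · simp [charmatrix_apply, blockDiagonal_apply, diagonal_apply, Prod.ext_iff]
  · simp [charmatrix_apply, blockDiagonal_apply, diagonal_apply, Prod.ext_iff, h]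

lemma charpoly_blockDiagonal' {m o : Type*} [DecidableEq m] [Fintype m] [DecidableEq o]
    [Fintype o] (M : o → Matrix m m R) :
    (blockDiagonal M).charpoly = ∏ k, (M k).charpoly := by
  rw [Matrix.charpoly, charmatrix_blockDiagonal', det_blockDiagonal]
  rfl

lemma charpoly_conj' {n : Type*} [DecidableEq n] [Fintype n] (P M Q : Matrix n n R)
    (h1 : P * Q = 1) : (P * M * Q).charpoly = M.charpoly := by
  have hPQ : P.map (C : R →+* R[X]) * Q.map C = 1 := by
    rw [← Matrix.map_mul, h1]
    simp
  have hchar : ∀ A : Matrix n n R, charmatrix A = (X : R[X]) • (1 : Matrix n n R[X]) - A.map C := by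
    intro A
    ext i j
    simp [charmatrix_apply, diagonal_apply, one_apply, Matrix.smul_apply, smul_ite]
  have key : charmatrix (P * M * Q) = P.map C * charmatrix M * Q.map C := by
    rw [hchar, hchar]
    rw [Matrix.mul_sub, Matrix.sub_mul]
    congr 1
    · rw [mul_smul_comm, mul_one, smul_mul_assoc, hPQ]
    · rw [← Matrix.map_mul, ← Matrix.map_mul]
  rw [Matrix.charpoly, key, det_mul, det_mul, Matrix.charpoly]
  have hdet : det (P.map (C : R →+* R[X])) * det (Q.map C) = 1 := by
    rw [← det_mul, hPQ, det_one]
  calc det (P.map (C : R →+* R[X])) * det (charmatrix M) * det (Q.map C)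
      = (det (P.map (C : R →+* R[X])) * det (Q.map C)) * det (charmatrix M) := by ring
    _ = det (charmatrix M) := by rw [hdet, one_mul]

/-- characteristic polynomial of the distributed-observer block matrix F₁
factors as ∏ᵢ hᵢ(s) with hᵢ(s) = s^{l-1} + c₂λᵢ s^{l-2} + c₂λᵢ ∑_{z=0}^{l-3} c_{l-z} s^z. -/
theorem stmt4 {N l : ℕ} (hl : 3 ≤ l)
    (H : Matrix (Fin N) (Fin N) ℝ) (hHsymm : H.IsSymm) (hHpd : H.PosDef)
    (c : ℕ → ℝ) (hc : ∀ k, 2 ≤ k → k ≤ l → 0 < c k)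
    (F1 : Matrix (Fin (l - 1) × Fin N) (Fin (l - 1) × Fin N) ℝ)
    (hF1 : F1 = Matrix.of fun p q =>
      if q.1.val = 0 then
        -(if p.1.val = 0 then c 2 else c (p.1.val + 2) * c 2) * H p.2 q.2
      else if q.1.val = p.1.val + 1 then (if p.2 = q.2 then (1 : ℝ) else 0)
      else 0) :
    F1.charpoly = ∏ i : Fin N,
      (X ^ (l - 1) + C (c 2 * hHpd.1.eigenvalues i) * X ^ (l - 2)
        + ∑ z ∈ Finset.range (l - 2), C (c 2 * hHpd.1.eigenvalues i * c (l - z)) * X ^ z) := by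
  obtain ⟨k, rfl⟩ : ∃ k, l = k + 3 := ⟨l - 3, by omega⟩
  set lam : Fin N → ℝ := hHpd.1.eigenvalues with hlam
  set V : Matrix (Fin N) (Fin N) ℝ := (hHpd.1.eigenvectorUnitary : Matrix (Fin N) (Fin N) ℝ)
    with hV
  have hV1 : V * star V = 1 :=
    (Matrix.mem_unitaryGroup_iff).mp (hHpd.1.eigenvectorUnitary).2
  have hspec : H = V * Matrix.diagonal lam * star V := by
    have h := hHpd.1.spectral_theorem
    rwa [RCLike.ofReal_real_eq_id, Function.id_comp] at h
  -- coefficient vector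
  set coef : Fin (k+2) → ℝ := fun m => if m.val = 0 then c 2 else c (m.val + 2) * c 2 with hcoef
  set A : Matrix (Fin (k+2)) (Fin (k+2)) ℝ :=
    Matrix.of (fun m j => if j.val = 0 then -coef m else 0) with hA
  set B : Matrix (Fin (k+2)) (Fin (k+2)) ℝ :=
    Matrix.of (fun m j => if j.val = 0 then 0 else if j.val = m.val + 1 then 1 else 0) with hB
  have hF1' : F1 = A ⊗ₖ H + B ⊗ₖ (1 : Matrix (Fin N) (Fin N) ℝ) := by
    rw [hF1]
    ext ⟨m, a⟩ ⟨j, b⟩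
    simp only [Matrix.of_apply, Matrix.add_apply, Matrix.kroneckerMap_apply, hA, hB,
      Matrix.one_apply]
    rcases eq_or_ne j.val 0 with h0 | h0
    · simp only [h0, if_pos rfl, if_neg (show ¬ (j.val = m.val + 1) by omega)]
      simp only [hcoef]
      split_ifs <;> ring
    · rcases eq_or_ne j.val (m.val + 1) with h1 | h1
      · simp [h0, h1]
      · simp [h0, h1]
  have hbd : A ⊗ₖ Matrix.diagonal lam + B ⊗ₖ (1 : Matrix (Fin N) (Fin N) ℝ)
      = blockDiagonal (fun i : Fin N => compM (k+2) (fun m => coef m * lam i)) := by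
    ext ⟨m, a⟩ ⟨j, b⟩
    simp only [Matrix.add_apply, Matrix.kroneckerMap_apply, hA, hB, Matrix.of_apply,
      Matrix.one_apply, Matrix.diagonal_apply, Matrix.blockDiagonal_apply, compM]
    rcases eq_or_ne a b with rfl | hab
    · rcases eq_or_ne j.val 0 with h0 | h0
      · simp [h0, show ¬ (j.val = m.val + 1) by omega]
      · rcases eq_or_ne j.val (m.val + 1) with h1 | h1
        · simp [h0, h1]
        · simp [h0, h1]
    · simp [hab]
  have h2 : ((1 : Matrix (Fin (k+2)) (Fin (k+2)) ℝ) ⊗ₖ V) * (A ⊗ₖ Matrix.diagonal lam)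
      * ((1 : Matrix (Fin (k+2)) (Fin (k+2)) ℝ) ⊗ₖ (star V)) = A ⊗ₖ H := by
    rw [← Matrix.mul_kronecker_mul, ← Matrix.mul_kronecker_mul, Matrix.one_mul,
      Matrix.mul_one, ← hspec]
  have h3 : ((1 : Matrix (Fin (k+2)) (Fin (k+2)) ℝ) ⊗ₖ V)
      * (B ⊗ₖ (1 : Matrix (Fin N) (Fin N) ℝ))
      * ((1 : Matrix (Fin (k+2)) (Fin (k+2)) ℝ) ⊗ₖ (star V))
      = B ⊗ₖ (1 : Matrix (Fin N) (Fin N) ℝ) := by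
    rw [← Matrix.mul_kronecker_mul, ← Matrix.mul_kronecker_mul, Matrix.one_mul,
      Matrix.mul_one, Matrix.mul_one, hV1]
  have hconj : F1 = ((1 : Matrix (Fin (k+2)) (Fin (k+2)) ℝ) ⊗ₖ V)
      * blockDiagonal (fun i : Fin N => compM (k+2) (fun m => coef m * lam i))
      * ((1 : Matrix (Fin (k+2)) (Fin (k+2)) ℝ) ⊗ₖ (star V)) := by
    rw [← hbd, Matrix.mul_add, Matrix.add_mul, h2, h3, hF1']
  have hunit : ((1 : Matrix (Fin (k+2)) (Fin (k+2)) ℝ) ⊗ₖ V)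
      * ((1 : Matrix (Fin (k+2)) (Fin (k+2)) ℝ) ⊗ₖ (star V)) = 1 := by
    rw [← Matrix.mul_kronecker_mul, Matrix.one_mul, hV1, Matrix.one_kronecker_one]
  rw [hconj, charpoly_conj' _ _ _ hunit, charpoly_blockDiagonal']
  refine Finset.prod_congr rfl fun i _ => ?_
  show (compM (k+2) fun m => coef m * lam i).charpoly
      = X ^ (k+2) + C (c 2 * lam i) * X ^ (k+1)
        + ∑ z ∈ Finset.range (k+1), C (c 2 * lam i * c (k + 3 - z)) * X ^ z
  have hcp : (compM (k+2) fun m => coef m * lam i).charpoly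
      = X^(k+2) + ∑ m : Fin (k+2), C (coef m * lam i) * X^(k+1 - m.val) :=
    compM_charpoly (k+1) _
  rw [hcp]
  rw [Fin.sum_univ_succ (f := fun m : Fin (k+2) => C (coef m * lam i) * X ^ (k + 1 - m.val))]
  have h0 : C (coef 0 * lam i) * X ^ (k + 1 - (0 : Fin (k+2)).val)
      = C (c 2 * lam i) * X ^ (k+1) := by
    simp [hcoef]
  rw [h0]
  have hrest : ∑ m : Fin (k+1), C (coef m.succ * lam i) * X ^ (k + 1 - (m.succ : Fin (k+2)).val)
      = ∑ z ∈ Finset.range (k + 1), C (c 2 * lam i * c (k + 3 - z)) * X ^ z := by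
    have hstep : ∀ m : Fin (k+1), C (coef m.succ * lam i) * X ^ (k + 1 - (m.succ : Fin (k+2)).val)
        = C (c 2 * lam i * c (m.val + 3)) * X ^ (k - m.val) := by
      intro m
      have e : (k + 1 - ((m.succ : Fin (k+2))).val) = k - m.val := by
        simp only [Fin.val_succ]; omega
      rw [e]
      have e2 : coef m.succ * lam i = c 2 * lam i * c (m.val + 3) := by
        simp only [hcoef, Fin.val_succ]
        rw [if_neg (by omega)]
        ring
      rw [e2]
    rw [Finset.sum_congr rfl fun m _ => hstep m]
    rw [Fin.sum_univ_eq_sum_range (fun m => C (c 2 * lam i * c (m + 3)) * X ^ (k - m)) (k+1)]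
    rw [← Finset.sum_range_reflect]
    refine Finset.sum_congr rfl fun z hz => ?_
    have hzk : z ≤ k := Nat.lt_succ_iff.mp (Finset.mem_range.mp hz)
    have e3 : k + 1 - 1 - z = k - z := by omega
    have e4 : k - z + 3 = k + 3 - z := by omega
    have e5 : k - (k - z) = z := by omega
    rw [e3, e4, e5]
  rw [hrest]
  ring
end

section
/- In particular, F₁ (as defined from H symmetric positive definite and c₂,…,c_l > 0) is Hurwitz stable if and only if for every eigenvalue λ_i of H the polynomial h_i(s) = s^{l−1} + c₂ λ_i s^{l−2} + c₂ λ_i ∑_{z=0}^{l−3} c_{l−z} s^{z} is Hurwitz stable. -/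
open Matrix Polynomial

private noncomputable def wseq (μ lam : ℂ) (co : ℕ → ℝ) : ℕ → ℂ
  | 0 => 1
  | p + 1 => μ * wseq μ lam co p + (co p : ℂ) * lam

private lemma wseq_closed (μ lam : ℂ) (co : ℕ → ℝ) (p : ℕ) :
    wseq μ lam co p = μ ^ p + lam * ∑ k ∈ Finset.range p, (co k : ℂ) * μ ^ (p - 1 - k) := by
  induction p with
  | zero => simp [wseq]
  | succ p ih =>
      have h : ∀ k ∈ Finset.range p, (co k : ℂ) * μ ^ (p + 1 - 1 - k)
          = μ * ((co k : ℂ) * μ ^ (p - 1 - k)) := by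
        intro k hk
        rw [Finset.mem_range] at hk
        have : p + 1 - 1 - k = (p - 1 - k) + 1 := by omega
        rw [this, pow_succ]; ring
      rw [wseq, ih, Finset.sum_range_succ, Finset.sum_congr rfl h, ← Finset.mul_sum]
      simp only [Nat.add_sub_cancel, Nat.sub_self, pow_zero, pow_succ]
      ring

private lemma term_eq (c : ℕ → ℝ) (n : ℕ) (lam : ℝ) (μ : ℂ) :
    μ * wseq μ (lam : ℂ) (fun p => if p = 0 then c 2 else c (p + 2) * c 2) (n + 1)
      + ((if n + 1 = 0 then c 2 else c (n + 1 + 2) * c 2 : ℝ) : ℂ) * (lam : ℂ)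
    = μ ^ (n + 2) + ((c 2 * lam : ℝ) : ℂ) * μ ^ (n + 1)
      + ∑ w ∈ Finset.range (n + 1), ((c 2 * lam * c (n + 3 - w) : ℝ) : ℂ) * μ ^ w := by
  set co : ℕ → ℝ := fun p => if p = 0 then c 2 else c (p + 2) * c 2 with hco
  have hrefl : ∑ w ∈ Finset.range (n + 1), ((c 2 * lam * c (n + 3 - w) : ℝ) : ℂ) * μ ^ w
      = ∑ k ∈ Finset.range (n + 1), ((c 2 * lam * c (k + 3) : ℝ) : ℂ) * μ ^ (n - k) := by
    rw [← Finset.sum_range_reflect]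
    refine Finset.sum_congr rfl fun k hk => ?_
    rw [Finset.mem_range] at hk
    have h1 : n + 1 - 1 - k = n - k := by omega
    have h2 : n + 3 - (n - k) = k + 3 := by omega
    rw [h1, h2]
  rw [hrefl, wseq_closed]
  have hU : μ * ∑ k ∈ Finset.range (n + 1), (co k : ℂ) * μ ^ (n + 1 - 1 - k) + (co (n + 1) : ℂ)
      = ∑ k ∈ Finset.range (n + 2), (co k : ℂ) * μ ^ (n + 1 - k) := by
    have hs := Finset.sum_range_succ (fun k => (co k : ℂ) * μ ^ (n + 1 - k)) (n + 1)
    rw [hs, Finset.mul_sum]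
    have hterm : ∀ k ∈ Finset.range (n + 1), μ * ((co k : ℂ) * μ ^ (n + 1 - 1 - k))
        = (co k : ℂ) * μ ^ (n + 1 - k) := by
      intro k hk
      rw [Finset.mem_range] at hk
      have : n + 1 - k = (n + 1 - 1 - k) + 1 := by omega
      rw [this, pow_succ]; ring
    rw [Finset.sum_congr rfl hterm]
    simp
  have hsplit : ∑ k ∈ Finset.range (n + 2), (co k : ℂ) * μ ^ (n + 1 - k)
      = ((c 2 : ℝ) : ℂ) * μ ^ (n + 1)
        + ∑ k ∈ Finset.range (n + 1), ((c (k + 3) * c 2 : ℝ) : ℂ) * μ ^ (n - k) := by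
    rw [Finset.sum_range_succ']
    have hterm : ∀ k ∈ Finset.range (n + 1), (co (k + 1) : ℂ) * μ ^ (n + 1 - (k + 1))
        = ((c (k + 3) * c 2 : ℝ) : ℂ) * μ ^ (n - k) := by
      intro k hk
      have h1 : n + 1 - (k + 1) = n - k := by omega
      have h2 : (co (k + 1) : ℂ) = ((c (k + 3) * c 2 : ℝ) : ℂ) := by
        simp [hco, show k + 1 + 2 = k + 3 by omega]
      rw [h1, h2]
    rw [Finset.sum_congr rfl hterm]
    have h0 : (co 0 : ℂ) * μ ^ (n + 1 - 0) = ((c 2 : ℝ) : ℂ) * μ ^ (n + 1) := by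
      simp [hco]
    rw [h0, add_comm]
  have hmain : μ * (μ ^ (n + 1) + (lam : ℂ) * ∑ k ∈ Finset.range (n + 1),
        (co k : ℂ) * μ ^ (n + 1 - 1 - k)) + (co (n + 1) : ℂ) * (lam : ℂ)
      = μ ^ (n + 2) + (lam : ℂ) * (μ * ∑ k ∈ Finset.range (n + 1),
        (co k : ℂ) * μ ^ (n + 1 - 1 - k) + (co (n + 1) : ℂ)) := by ring
  show _ + (co (n + 1) : ℂ) * (lam : ℂ) = _
  rw [hmain, hU, hsplit, mul_add, Finset.mul_sum]
  have hterm : ∀ k ∈ Finset.range (n + 1),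
      (lam : ℂ) * (((c (k + 3) * c 2 : ℝ) : ℂ) * μ ^ (n - k))
      = ((c 2 * lam * c (k + 3) : ℝ) : ℂ) * μ ^ (n - k) := by
    intro k _; push_cast; ring
  rw [Finset.sum_congr rfl hterm]
  push_cast
  ring

/-- F₁ is Hurwitz stable iff each polynomial hᵢ(s) is Hurwitz stable. -/
theorem stmt5 {N l : ℕ} (hl : 3 ≤ l)
    (H : Matrix (Fin N) (Fin N) ℝ) (hHsymm : H.IsSymm) (hHpd : H.PosDef)
    (c : ℕ → ℝ) (hc : ∀ k, 2 ≤ k → k ≤ l → 0 < c k)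
    (F1 : Matrix (Fin (l - 1) × Fin N) (Fin (l - 1) × Fin N) ℝ)
    (hF1 : F1 = Matrix.of fun p q =>
      if q.1.val = 0 then
        -(if p.1.val = 0 then c 2 else c (p.1.val + 2) * c 2) * H p.2 q.2
      else if q.1.val = p.1.val + 1 then (if p.2 = q.2 then (1 : ℝ) else 0)
      else 0) :
    (∀ μ ∈ spectrum ℂ (F1.map (Complex.ofReal)), μ.re < 0) ↔
      (∀ i : Fin N, ∀ z : ℂ,
        ((X ^ (l - 1) + C (c 2 * hHpd.1.eigenvalues i) * X ^ (l - 2)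
          + ∑ w ∈ Finset.range (l - 2),
              C (c 2 * hHpd.1.eigenvalues i * c (l - w)) * X ^ w).map
            (algebraMap ℝ ℂ)).IsRoot z → z.re < 0) := by
  obtain ⟨n, rfl⟩ : ∃ n, l = n + 3 := ⟨l - 3, by omega⟩
  clear hl hc
  set lam : Fin N → ℝ := hHpd.1.eigenvalues with hlam
  set b := hHpd.1.eigenvectorBasis with hb
  set co : ℕ → ℝ := fun p => if p = 0 then c 2 else c (p + 2) * c 2 with hco
  set mC : Matrix (Fin (n + 2) × Fin N) (Fin (n + 2) × Fin N) ℂ :=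
    F1.map (Complex.ofReal) with hmC
  -- the root condition as an explicit equation
  have hroot : ∀ (i : Fin N) (z : ℂ),
      ((X ^ (n + 3 - 1) + C (c 2 * lam i) * X ^ (n + 3 - 2)
          + ∑ w ∈ Finset.range (n + 3 - 2),
              C (c 2 * lam i * c (n + 3 - w)) * X ^ w).map
            (algebraMap ℝ ℂ)).IsRoot z ↔
      z ^ (n + 2) + ((c 2 * lam i : ℝ) : ℂ) * z ^ (n + 1)
        + ∑ w ∈ Finset.range (n + 1), ((c 2 * lam i * c (n + 3 - w) : ℝ) : ℂ) * z ^ w = 0 := by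
    intro i z
    simp only [Polynomial.IsRoot.def, Polynomial.eval_map, Polynomial.eval₂_add,
      Polynomial.eval₂_pow, Polynomial.eval₂_X, Polynomial.eval₂_mul, Polynomial.eval₂_C,
      Polynomial.eval₂_finset_sum, Complex.coe_algebraMap]
    rfl
  -- spectrum membership as eigenvector existence
  have hspec : ∀ μ : ℂ, μ ∈ spectrum ℂ mC ↔ ∃ v, v ≠ 0 ∧ mC *ᵥ v = μ • v := by
    intro μ
    rw [spectrum.mem_iff, Matrix.isUnit_iff_isUnit_det, isUnit_iff_ne_zero, not_ne_iff,
      ← Matrix.exists_mulVec_eq_zero_iff]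
    have hrw : ∀ v : Fin (n + 2) × Fin N → ℂ,
        ((algebraMap ℂ (Matrix (Fin (n + 2) × Fin N) (Fin (n + 2) × Fin N) ℂ)) μ - mC) *ᵥ v
          = μ • v - mC *ᵥ v := by
      intro v
      rw [Matrix.sub_mulVec, Algebra.algebraMap_eq_smul_one, Matrix.smul_mulVec,
        Matrix.one_mulVec]
    constructor
    · rintro ⟨v, hv0, hv⟩
      exact ⟨v, hv0, by rw [hrw] at hv; exact (sub_eq_zero.mp hv).symm⟩
    · rintro ⟨v, hv0, hv⟩
      refine ⟨v, hv0, ?_⟩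
      rw [hrw, hv, sub_self]
  -- the complexified eigenvector equations for H
  have hHb : ∀ (i : Fin N) (k : Fin N),
      ∑ j, (H k j : ℂ) * (b i j : ℂ) = (lam i : ℂ) * (b i k : ℂ) := by
    intro i k
    have h := congrFun (hHpd.1.mulVec_eigenvectorBasis i) k
    simp only [Matrix.mulVec, dotProduct, Pi.smul_apply, smul_eq_mul] at h
    have h2 : ((∑ j, H k j * b i j : ℝ) : ℂ) = ((lam i * b i k : ℝ) : ℂ) := by
      exact_mod_cast congrArg Complex.ofReal h
    push_cast at h2
    exact h2
  -- mulVec formula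
  have hmul : ∀ (v : Fin (n + 2) × Fin N → ℂ) (p : Fin (n + 2)) (j : Fin N),
      (mC *ᵥ v) (p, j)
        = -((co p.val : ℝ) : ℂ) * (∑ k, (H j k : ℂ) * v ((0 : Fin (n + 2)), k))
          + (if h : p.val + 1 < n + 2 then v (⟨p.val + 1, h⟩, j) else 0) := by
    intro v p j
    have hentry : ∀ (q : Fin (n + 2)) (k : Fin N),
        mC (p, j) (q, k) = if q.val = 0 then -((co p.val : ℝ) : ℂ) * (H j k : ℂ)
          else if q.val = p.val + 1 then (if j = k then 1 else 0) else 0 := by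
      intro q k
      rw [hmC, hF1]
      simp only [Matrix.map_apply, Matrix.of_apply, hco]
      split_ifs <;> push_cast <;> ring
    have hsum : (mC *ᵥ v) (p, j) = ∑ q : Fin (n + 2), ∑ k, mC (p, j) (q, k) * v (q, k) := by
      simp only [Matrix.mulVec, dotProduct]
      rw [Fintype.sum_prod_type]
    rw [hsum]
    by_cases hp : p.val + 1 < n + 2
    · rw [dif_pos hp]
      have hq : ∀ q : Fin (n + 2), (∑ k, mC (p, j) (q, k) * v (q, k))
          = (if q = 0 then -((co p.val : ℝ) : ℂ) * ∑ k, (H j k : ℂ) * v ((0 : Fin (n + 2)), k)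
              else 0)
            + (if q = (⟨p.val + 1, hp⟩ : Fin (n + 2)) then v (q, j) else 0) := by
        intro q
        by_cases hq0 : q.val = 0
        · have hq0' : q = 0 := Fin.ext hq0
          subst hq0'
          rw [if_pos rfl, if_neg (by intro h; rw [h] at hq0; simp at hq0)]
          rw [Finset.sum_congr rfl fun k _ => by rw [hentry, if_pos hq0]]
          rw [Finset.mul_sum, add_zero]
          exact Finset.sum_congr rfl fun k _ => by ring
        · rw [if_neg (fun h => hq0 (by rw [h]; rfl))]
          by_cases hq1 : q.val = p.val + 1
          · have hq1' : q = (⟨p.val + 1, hp⟩ : Fin (n + 2)) := Fin.ext hq1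
            rw [if_pos hq1', zero_add]
            rw [Finset.sum_congr rfl fun k _ => by
              rw [hentry, if_neg hq0, if_pos hq1, ite_mul, one_mul, zero_mul]]
            rw [Finset.sum_ite_eq Finset.univ j fun k => v (q, k)]
            simp
          · rw [if_neg (fun h => hq1 (by rw [h]))]
            rw [Finset.sum_congr rfl fun k _ => by
              rw [hentry, if_neg hq0, if_neg hq1, zero_mul]]
            simp
      rw [Finset.sum_congr rfl fun q _ => hq q, Finset.sum_add_distrib,
        Finset.sum_ite_eq' Finset.univ (0 : Fin (n + 2)),
        Finset.sum_ite_eq' Finset.univ (⟨p.val + 1, hp⟩ : Fin (n + 2)) fun q => v (q, j)]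
      simp
    · rw [dif_neg hp]
      have hq : ∀ q : Fin (n + 2), (∑ k, mC (p, j) (q, k) * v (q, k))
          = (if q = 0 then -((co p.val : ℝ) : ℂ) * ∑ k, (H j k : ℂ) * v ((0 : Fin (n + 2)), k)
              else 0) := by
        intro q
        by_cases hq0 : q.val = 0
        · have hq0' : q = 0 := Fin.ext hq0
          subst hq0'
          rw [if_pos rfl]
          rw [Finset.sum_congr rfl fun k _ => by rw [hentry, if_pos hq0]]
          rw [Finset.mul_sum]
          exact Finset.sum_congr rfl fun k _ => by ring
        · rw [if_neg (fun h => hq0 (by rw [h]; rfl))]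
          have hq1 : ¬ q.val = p.val + 1 := by omega
          rw [Finset.sum_congr rfl fun k _ => by
            rw [hentry, if_neg hq0, if_neg hq1, zero_mul]]
          simp
      rw [Finset.sum_congr rfl fun q _ => hq q,
        Finset.sum_ite_eq' Finset.univ (0 : Fin (n + 2))]
      simp
  -- injectivity of projections on the eigenbasis
  have hbinj : ∀ x : Fin N → ℂ, (∀ i, ∑ j, (b i j : ℂ) * x j = 0) → x = 0 := by
    have key : ∀ y : EuclideanSpace ℝ (Fin N), (∀ i, ∑ j, b i j * y j = 0) → y = 0 := by
      intro y hy
      have hr : b.repr y = 0 := by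
        ext i
        rw [OrthonormalBasis.repr_apply_apply, PiLp.inner_apply]
        simpa [mul_comm] using hy i
      have := congrArg b.repr.symm hr
      simpa using this
    intro x hx
    have hre : (fun j => (x j).re) = (0 : EuclideanSpace ℝ (Fin N)) := by
      refine congrArg WithLp.ofLp (key (WithLp.toLp 2 fun j => (x j).re) ?_)
      intro i
      have h := congrArg Complex.re (hx i)
      simpa [Complex.re_sum, Complex.re_ofReal_mul] using h
    have him : (fun j => (x j).im) = (0 : EuclideanSpace ℝ (Fin N)) := by
      refine congrArg WithLp.ofLp (key (WithLp.toLp 2 fun j => (x j).im) ?_)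
      intro i
      have h := congrArg Complex.im (hx i)
      simpa [Complex.im_sum, Complex.im_ofReal_mul] using h
    funext j
    have h1 : (x j).re = 0 := congrFun hre j
    have h2 : (x j).im = 0 := congrFun him j
    exact Complex.ext h1 h2
  -- the core equivalence
  have hiff : ∀ μ : ℂ, μ ∈ spectrum ℂ mC ↔ ∃ i : Fin N,
      μ ^ (n + 2) + ((c 2 * lam i : ℝ) : ℂ) * μ ^ (n + 1)
        + ∑ w ∈ Finset.range (n + 1), ((c 2 * lam i * c (n + 3 - w) : ℝ) : ℂ) * μ ^ w = 0 := by
    intro μ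
    rw [hspec μ]
    constructor
    · rintro ⟨v, hv0, hv⟩
      have hcomp : ∀ (p : Fin (n + 2)) (j : Fin N),
          μ * v (p, j) = -((co p.val : ℝ) : ℂ) * (∑ k, (H j k : ℂ) * v ((0 : Fin (n + 2)), k))
            + (if h : p.val + 1 < n + 2 then v (⟨p.val + 1, h⟩, j) else 0) := by
        intro p j
        rw [← hmul v p j, hv]
        simp
      set wv : Fin N → Fin (n + 2) → ℂ := fun i p => ∑ j, (b i j : ℂ) * v (p, j) with hwv
      have hsym : ∀ j k, (H k j : ℂ) = (H j k : ℂ) := by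
        intro j k
        have := congrFun (congrFun hHsymm j) k
        simp only [Matrix.transpose_apply] at this
        exact_mod_cast congrArg Complex.ofReal this
      have hSw : ∀ i : Fin N,
          ∑ j, (b i j : ℂ) * (∑ k, (H j k : ℂ) * v ((0 : Fin (n + 2)), k))
            = (lam i : ℂ) * wv i 0 := by
        intro i
        calc ∑ j, (b i j : ℂ) * (∑ k, (H j k : ℂ) * v ((0 : Fin (n + 2)), k))
            = ∑ j, ∑ k, (H k j : ℂ) * (b i j : ℂ) * v ((0 : Fin (n + 2)), k) := by
              refine Finset.sum_congr rfl fun j _ => ?_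
              rw [Finset.mul_sum]
              exact Finset.sum_congr rfl fun k _ => by rw [hsym j k]; ring
          _ = ∑ k, (∑ j, (H k j : ℂ) * (b i j : ℂ)) * v ((0 : Fin (n + 2)), k) := by
              rw [Finset.sum_comm]
              exact Finset.sum_congr rfl fun k _ => by rw [Finset.sum_mul]
          _ = ∑ k, (lam i : ℂ) * ((b i k : ℂ) * v ((0 : Fin (n + 2)), k)) := by
              refine Finset.sum_congr rfl fun k _ => ?_
              rw [hHb i k]; ring
          _ = (lam i : ℂ) * wv i 0 := by rw [← Finset.mul_sum]
      have hproj : ∀ (i : Fin N) (p : Fin (n + 2)),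
          μ * wv i p = -((co p.val : ℝ) : ℂ) * ((lam i : ℂ) * wv i 0)
            + (if h : p.val + 1 < n + 2 then wv i ⟨p.val + 1, h⟩ else 0) := by
        intro i p
        have step1 : μ * wv i p = ∑ j, (b i j : ℂ) * (μ * v (p, j)) := by
          rw [hwv, Finset.mul_sum]
          exact Finset.sum_congr rfl fun j _ => by ring
        rw [step1, Finset.sum_congr rfl fun j _ => by rw [hcomp p j]]
        rw [Finset.sum_congr rfl fun j (_ : j ∈ Finset.univ) => mul_add (((b i j : ℝ)) : ℂ) _ _,
          Finset.sum_add_distrib]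
        congr 1
        · rw [← hSw i, Finset.mul_sum]
          exact Finset.sum_congr rfl fun j _ => by ring
        · by_cases h : p.val + 1 < n + 2
          · simp only [dif_pos h, hwv]
          · simp only [dif_neg h, mul_zero, Finset.sum_const_zero]
      have hrec : ∀ (i : Fin N) (p : ℕ) (hp : p < n + 2),
          wv i ⟨p, hp⟩ = wseq μ (lam i) co p * wv i 0 := by
        intro i p
        induction p with
        | zero =>
            intro hp
            rw [show (⟨0, hp⟩ : Fin (n + 2)) = 0 from rfl, wseq, one_mul]
        | succ p ih =>
            intro hp
            have hp' : p < n + 2 := by omega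
            have h1 := hproj i ⟨p, hp'⟩
            simp only [Fin.val_mk] at h1
            rw [dif_pos hp, ih hp'] at h1
            have h1' : μ * (wseq μ ((lam i : ℝ) : ℂ) co p * wv i 0)
                = -((co p : ℝ) : ℂ) * (((lam i : ℝ) : ℂ) * wv i 0) + wv i ⟨p + 1, hp⟩ := h1
            rw [wseq]
            linear_combination -h1'
      have hlastp : ∀ i : Fin N,
          (μ * wseq μ (lam i) co (n + 1) + ((co (n + 1) : ℝ) : ℂ) * (lam i : ℂ)) * wv i 0
            = 0 := by
        intro i
        have h1 := hproj i ⟨n + 1, by omega⟩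
        rw [dif_neg (show ¬ ((⟨n + 1, by omega⟩ : Fin (n + 2)).val + 1 < n + 2) by simp)] at h1
        rw [hrec i (n + 1) (by omega)] at h1
        linear_combination h1
      have hex : ∃ i, wv i 0 ≠ 0 := by
        by_contra hall
        push_neg at hall
        apply hv0
        funext x
        obtain ⟨p, j⟩ := x
        have hz : (fun j => v (p, j)) = 0 := by
          apply hbinj
          intro i
          have : wv i p = 0 := by
            rw [show p = (⟨p.val, p.isLt⟩ : Fin (n + 2)) from rfl, hrec i p.val p.isLt,
              hall i, mul_zero]
          exact this
        exact congrFun hz j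
      obtain ⟨i, hi⟩ := hex
      refine ⟨i, ?_⟩
      rcases mul_eq_zero.mp (hlastp i) with h | h
      · rw [← term_eq c n (lam i) μ]
        simp only [hco] at h
        convert h using 2 <;> simp [hco]
      · exact absurd h hi
    · rintro ⟨i, hi⟩
      have hterm0 : μ * wseq μ (lam i) co (n + 1) + ((co (n + 1) : ℝ) : ℂ) * (lam i : ℂ)
          = 0 := by
        have ht := term_eq c n (lam i) μ
        simp only [← hco] at ht
        have hcoval : ((if n + 1 = 0 then c 2 else c (n + 1 + 2) * c 2 : ℝ) : ℂ)
            = ((co (n + 1) : ℝ) : ℂ) := by norm_num [hco]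
        rw [hcoval] at ht
        rw [ht]
        exact hi
      refine ⟨fun x => wseq μ (lam i) co x.1.val * (b i x.2 : ℂ), ?_, ?_⟩
      · intro h0
        have hbne : b i ≠ 0 := b.orthonormal.ne_zero i
        obtain ⟨j, hj⟩ : ∃ j, b i j ≠ 0 := by
          by_contra hall
          push_neg at hall
          exact hbne (by ext j; simpa using hall j)
        have h1 := congrFun h0 ((0 : Fin (n + 2)), j)
        simp only [show ((0 : Fin (n + 2))).val = 0 from rfl, wseq, one_mul,
          Pi.zero_apply] at h1
        exact hj (by simpa using h1)
      · funext x
        obtain ⟨p, j⟩ := x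
        rw [hmul]
        have hsum : ∑ k, (H j k : ℂ)
              * (wseq μ (lam i) co ((0 : Fin (n + 2)) : Fin (n + 2)).val * (b i k : ℂ))
            = (lam i : ℂ) * (b i j : ℂ) := by
          simp only [show ((0 : Fin (n + 2))).val = 0 from rfl, wseq, one_mul]
          exact hHb i j
        rw [hsum]
        have hrhs : (μ • fun x : Fin (n + 2) × Fin N =>
              wseq μ (lam i) co x.1.val * (b i x.2 : ℂ)) (p, j)
            = μ * (wseq μ (lam i) co p.val * (b i j : ℂ)) := rfl
        rw [hrhs]
        by_cases hp : p.val + 1 < n + 2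
        · rw [dif_pos hp]
          show _ + wseq μ (lam i) co (p.val + 1) * (b i j : ℂ) = _
          rw [wseq]
          ring
        · rw [dif_neg hp]
          have hlast : p.val = n + 1 := by omega
          simp only [hlast]
          linear_combination (-(b i j : ℂ)) * hterm0
  constructor
  · intro hs i z hz
    exact hs z ((hiff z).2 ⟨i, (hroot i z).1 hz⟩)
  · intro hs μ hμ
    obtain ⟨i, hi⟩ := (hiff μ).1 hμ
    exact hs i μ ((hroot i μ).2 hi)
end

section
/- Let F be Hurwitz with Lyapunov pair (Q, η) satisfying FᵀQ + QF = −ηI, Q ≻ 0, and suppose g : ℝ^n → ℝ^n satisfies ‖g(x)‖ ≤ γ‖x‖ with γ < η/(2‖Q‖). Then for any continuous input ℓ : [0,∞) → ℝ^n tending to 0, every solution of ė = Fe + g(e) + ℓ(t) tends to 0 as t → ∞. -/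
open Matrix Set Filter

/-- Scalar ODE comparison: if `f' ≤ -a f + u` with `a > 0`, `f ≥ 0`, `u → 0`, then `f → 0`. -/
lemma stmt12_ode {f f' u : ℝ → ℝ} {a : ℝ} (ha : 0 < a)
    (hf : ∀ t ∈ Ici (0:ℝ), HasDerivAt f (f' t) t)
    (hb : ∀ t ∈ Ici (0:ℝ), f' t ≤ -a * f t + u t)
    (hnn : ∀ t ∈ Ici (0:ℝ), 0 ≤ f t)
    (hu : Tendsto u atTop (nhds 0)) :
    Tendsto f atTop (nhds 0) := by
  rw [Metric.tendsto_nhds]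
  intro δ hδ
  have hε : 0 < a * δ / 4 := by positivity
  set ε := a * δ / 4 with hεdef
  obtain ⟨T₀, hT₀⟩ := eventually_atTop.mp (hu.eventually_lt_const hε)
  set T := max T₀ 0 with hT
  have hT0 : (0:ℝ) ≤ T := le_max_right _ _
  -- the auxiliary function H
  set H : ℝ → ℝ := fun t => (f t - ε / a) * Real.exp (a * t) with hH
  have hHd : ∀ t ∈ Ici (0:ℝ), HasDerivAt H
      (f' t * Real.exp (a * t) + (f t - ε / a) * (Real.exp (a * t) * a)) t := by
    intro t ht
    have hexp : HasDerivAt (fun s : ℝ => Real.exp (a * s)) (Real.exp (a * t) * a) t := by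
      simpa using (((hasDerivAt_id t).const_mul a).exp)
    exact ((hf t ht).sub_const (ε / a)).mul hexp
  have hanti : AntitoneOn H (Ici T) := by
    apply antitoneOn_of_deriv_nonpos (convex_Ici T)
    · intro t ht
      exact (hHd t (le_trans hT0 ht)).continuousAt.continuousWithinAt
    · intro t ht
      rw [interior_Ici] at ht
      exact (hHd t (le_trans hT0 (le_of_lt ht))).differentiableAt.differentiableWithinAt
    · intro t ht
      rw [interior_Ici] at ht
      have ht' : t ∈ Ici (0:ℝ) := le_trans hT0 (le_of_lt ht)
      rw [(hHd t ht').deriv]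
      have h1 : f' t ≤ -a * f t + u t := hb t ht'
      have h2 : u t < ε := hT₀ t (le_trans (le_max_left _ _) (le_of_lt ht))
      have hE : 0 < Real.exp (a * t) := Real.exp_pos _
      have h3 : f' t + a * f t - ε ≤ 0 := by linarith
      have : f' t * Real.exp (a * t) + (f t - ε / a) * (Real.exp (a * t) * a)
          = (f' t + a * f t - ε) * Real.exp (a * t) := by
        field_simp
        ring
      rw [this]
      exact mul_nonpos_of_nonpos_of_nonneg h3 (le_of_lt hE)
  set Bc := (f T - ε / a) * Real.exp (a * T) with hBc
  have hfle : ∀ t ≥ T, f t ≤ ε / a + Bc * Real.exp (-(a * t)) := by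
    intro t ht
    have h1 : H t ≤ H T := hanti self_mem_Ici ht ht
    have hE : 0 < Real.exp (-(a * t)) := Real.exp_pos _
    have h2 : H t * Real.exp (-(a * t)) ≤ Bc * Real.exp (-(a * t)) :=
      mul_le_mul_of_nonneg_right h1 (le_of_lt hE)
    have h3 : H t * Real.exp (-(a * t)) = f t - ε / a := by
      rw [hH, mul_assoc, ← Real.exp_add]
      simp
    rw [h3] at h2
    linarith
  -- Bc * exp(-(a t)) → 0
  have htend : Tendsto (fun t => Bc * Real.exp (-(a * t))) atTop (nhds 0) := by
    have h1 : Tendsto (fun t : ℝ => a * t) atTop atTop :=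
      Tendsto.const_mul_atTop ha tendsto_id
    have h2 : Tendsto (fun t : ℝ => Real.exp (-(a * t))) atTop (nhds 0) :=
      Real.tendsto_exp_neg_atTop_nhds_zero.comp h1
    simpa using h2.const_mul Bc
  have h4 : ∀ᶠ t in atTop, Bc * Real.exp (-(a * t)) < ε / a :=
    htend.eventually_lt_const (by positivity)
  filter_upwards [h4, eventually_ge_atTop T, eventually_ge_atTop (0:ℝ)] with t h4t hTt h0t
  have h5 : f t ≤ ε / a + Bc * Real.exp (-(a * t)) := hfle t hTt
  have h6 : 0 ≤ f t := hnn t h0t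
  have h7 : ε / a = δ / 4 := by
    rw [hεdef]
    field_simp
  rw [Real.dist_eq, abs_sub_comm, abs_of_nonpos (by linarith), neg_sub, sub_zero]
  linarith

/-- inner product with a matrix CLM as a dot product -/
lemma stmt12_inner {n : ℕ} (M : Matrix (Fin n) (Fin n) ℝ) (x y : EuclideanSpace ℝ (Fin n)) :
    (inner ℝ (Matrix.toEuclideanCLM (𝕜 := ℝ) M x) y : ℝ)
      = M *ᵥ (WithLp.equiv 2 _ x) ⬝ᵥ (WithLp.equiv 2 _ y) := by
  simp [PiLp.inner_apply, dotProduct]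
  exact Finset.sum_congr rfl fun i _ => mul_comm _ _

lemma stmt12_self_dot {n : ℕ} (x : EuclideanSpace ℝ (Fin n)) :
    (WithLp.equiv 2 _ x) ⬝ᵥ (WithLp.equiv 2 _ x) = ‖x‖ ^ 2 := by
  rw [← real_inner_self_eq_norm_sq]
  simp [PiLp.inner_apply, dotProduct]
  rw [EuclideanSpace.norm_eq, Real.sq_sqrt (by positivity)]
  simp [sq]

/-- positive-definiteness lower bound on the quadratic form -/
lemma stmt12_pd {n : ℕ} (hn : 0 < n) {Q : Matrix (Fin n) (Fin n) ℝ} (hQ : Q.PosDef) :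
    ∃ c > 0, ∀ x : EuclideanSpace ℝ (Fin n),
      c * ‖x‖ ^ 2 ≤ (inner ℝ (Matrix.toEuclideanCLM (𝕜 := ℝ) Q x) x : ℝ) := by
  set A := Matrix.toEuclideanCLM (𝕜 := ℝ) Q with hA
  set φ : EuclideanSpace ℝ (Fin n) → ℝ := fun x => inner ℝ (A x) x with hφ
  have hφc : Continuous φ := (A.continuous.inner continuous_id)
  have hφpos : ∀ x : EuclideanSpace ℝ (Fin n), x ≠ 0 → 0 < φ x := by
    intro x hx
    have h1 : φ x = Q *ᵥ (WithLp.equiv 2 _ x) ⬝ᵥ (WithLp.equiv 2 _ x) := stmt12_inner Q x x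
    have hx' : (WithLp.equiv 2 _ x) ≠ 0 := by
      simpa using hx
    have h2 := hQ.dotProduct_mulVec_pos (x := WithLp.equiv 2 _ x) hx'
    have h2' : 0 < (WithLp.equiv 2 _ x) ⬝ᵥ Q *ᵥ (WithLp.equiv 2 _ x) := by exact_mod_cast h2
    rw [h1, dotProduct_comm]
    exact h2'
  -- sphere nonempty
  set x₁ : EuclideanSpace ℝ (Fin n) := EuclideanSpace.single (⟨0, hn⟩ : Fin n) (1:ℝ) with hx₁
  have hx₁n : ‖x₁‖ = 1 := by simp [hx₁]
  have hx₁s : x₁ ∈ Metric.sphere (0 : EuclideanSpace ℝ (Fin n)) 1 := by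
    simp [mem_sphere_iff_norm, hx₁n]
  obtain ⟨x₀, hx₀s, hmin⟩ := (isCompact_sphere (0 : EuclideanSpace ℝ (Fin n)) 1).exists_isMinOn
    ⟨x₁, hx₁s⟩ hφc.continuousOn
  have hx₀n : ‖x₀‖ = 1 := by simpa [mem_sphere_iff_norm] using hx₀s
  have hx₀0 : x₀ ≠ 0 := by
    intro h; rw [h] at hx₀n; simp at hx₀n
  refine ⟨φ x₀, hφpos x₀ hx₀0, ?_⟩
  intro x
  rcases eq_or_ne x 0 with rfl | hx
  · simp
  · have hxn : 0 < ‖x‖ := norm_pos_iff.mpr hx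
    set y : EuclideanSpace ℝ (Fin n) := ‖x‖⁻¹ • x with hy
    have hyn : ‖y‖ = 1 := by
      rw [hy, norm_smul]
      simp [abs_of_pos hxn, inv_mul_cancel₀ (ne_of_gt hxn)]
    have hys : y ∈ Metric.sphere (0 : EuclideanSpace ℝ (Fin n)) 1 := by
      simp [mem_sphere_iff_norm, hyn]
    have h1 : φ x₀ ≤ φ y := hmin hys
    have hxy : x = ‖x‖ • y := by
      rw [hy, smul_smul, mul_inv_cancel₀ (ne_of_gt hxn), one_smul]
    have h2 : (inner ℝ (A x) x : ℝ) = ‖x‖ ^ 2 * φ y := by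
      conv_lhs => rw [hxy]
      rw [A.map_smul, real_inner_smul_left, real_inner_smul_right]
      show ‖x‖ * (‖x‖ * (inner ℝ (A y) y : ℝ)) = _
      ring
    rw [h2]
    nlinarith [h1, sq_nonneg ‖x‖, hφpos x₀ hx₀0]

lemma stmt12_arith {η γ N σ a C x l V iw : ℝ}
    (hσdef : σ = η - 2 * N * γ) (hσ : 0 < σ)
    (ha : 0 < a) (ha' : a * (2 * N) = σ) (hC' : C * σ = 2 * N ^ 2)
    (hib : iw ≤ N * x * (γ * x + l))
    (hV1 : V ≤ N * x ^ 2) :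
    -(η * x ^ 2) + 2 * iw ≤ -a * V + C * l ^ 2 := by
  have hexp : N * x * (γ * x + l) = N * γ * x ^ 2 + N * x * l := by ring
  rw [hexp] at hib
  have hCl : C * l ^ 2 * σ = 2 * N ^ 2 * l ^ 2 := by linear_combination l ^ 2 * hC'
  have hyoung : 2 * (N * x * l) ≤ (σ / 2) * x ^ 2 + C * l ^ 2 := by
    nlinarith [sq_nonneg (σ * x - 2 * N * l), hσ, hCl]
  have hav : a * V ≤ (σ / 2) * x ^ 2 := by
    have h2 : a * (N * x ^ 2) = (σ / 2) * x ^ 2 := by linear_combination (x ^ 2 / 2) * ha'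
    nlinarith [mul_le_mul_of_nonneg_left hV1 (le_of_lt ha)]
  have hσx : σ * x ^ 2 = (η - 2 * N * γ) * x ^ 2 := by rw [hσdef]
  nlinarith [hib, hyoung, hav, hσx]

/-- ISS cascade: FᵀQ + QF = −ηI, ‖g(x)‖ ≤ γ‖x‖ with γ < η/(2‖Q‖), and
ℓ continuous with ℓ(t) → 0 imply every solution of ė = Fe + g(e) + ℓ(t) tends to 0. -/
theorem stmt12 {n : ℕ} (F Q : Matrix (Fin n) (Fin n) ℝ)
    (hHurwitz : ∀ μ ∈ spectrum ℂ (F.map (Complex.ofReal)), μ.re < 0)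
    (hQ : Q.PosDef) (η : ℝ) (hη : 0 < η)
    (hLyap : Fᵀ * Q + Q * F = -(η • (1 : Matrix (Fin n) (Fin n) ℝ)))
    (γ : ℝ) (hγ : γ < η / (2 * ‖Matrix.toEuclideanCLM (𝕜 := ℝ) Q‖))
    (g : EuclideanSpace ℝ (Fin n) → EuclideanSpace ℝ (Fin n))
    (hg : ∀ x, ‖g x‖ ≤ γ * ‖x‖)
    (ℓ : ℝ → EuclideanSpace ℝ (Fin n))
    (hℓcont : ContinuousOn ℓ (Ici 0))
    (hℓ0 : Tendsto ℓ atTop (nhds 0))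
    (e : ℝ → EuclideanSpace ℝ (Fin n))
    (hdyn : ∀ t ∈ Ici (0 : ℝ),
      HasDerivAt e (Matrix.toEuclideanCLM (𝕜 := ℝ) F (e t) + g (e t) + ℓ t) t) :
    Tendsto e atTop (nhds 0) := by
  rcases Nat.eq_zero_or_pos n with hn | hn
  · subst hn
    haveI : Subsingleton (EuclideanSpace ℝ (Fin 0)) :=
      ⟨fun p q => by ext i; exact Fin.elim0 i⟩
    have he : e = fun _ => (0 : EuclideanSpace ℝ (Fin 0)) :=
      funext fun t => Subsingleton.elim _ _
    rw [he]
    exact tendsto_const_nhds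
  set A := Matrix.toEuclideanCLM (𝕜 := ℝ) Q with hA
  set B := Matrix.toEuclideanCLM (𝕜 := ℝ) F with hB
  set N := ‖A‖ with hN
  obtain ⟨c, hc0, hc⟩ := stmt12_pd hn hQ
  -- N > 0
  have hQT : Qᵀ = Q := by
    have := hQ.1
    simpa [Matrix.IsHermitian, Matrix.conjTranspose_eq_transpose_of_trivial] using this
  set x₁ : EuclideanSpace ℝ (Fin n) := EuclideanSpace.single (⟨0, hn⟩ : Fin n) (1:ℝ) with hx₁
  have hx₁n : ‖x₁‖ = 1 := by simp [hx₁]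
  have hN0 : 0 < N := by
    have h1 : c * ‖x₁‖ ^ 2 ≤ (inner ℝ (A x₁) x₁ : ℝ) := hc x₁
    have h2 : (inner ℝ (A x₁) x₁ : ℝ) ≤ ‖A x₁‖ * ‖x₁‖ := real_inner_le_norm _ _
    have h3 : ‖A x₁‖ ≤ N * ‖x₁‖ := A.le_opNorm x₁
    rw [hx₁n] at h1 h2 h3
    simp at h1 h2 h3
    linarith
  set σ := η - 2 * N * γ with hσdef
  have hσ : 0 < σ := by
    have h1 : γ * (2 * N) < η := by
      rw [lt_div_iff₀ (by positivity : (0:ℝ) < 2 * N)] at hγ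
      exact hγ
    rw [hσdef]; linarith
  set a := σ / (2 * N) with hadef
  have ha : 0 < a := by positivity
  have ha' : a * (2 * N) = σ := div_mul_cancel₀ _ (by positivity)
  set C := 2 * N ^ 2 / σ with hCdef
  have hC' : C * σ = 2 * N ^ 2 := div_mul_cancel₀ _ (ne_of_gt hσ)
  have hCnn : 0 ≤ C := by positivity
  -- symmetry of A in the inner product
  have hsym : ∀ x y : EuclideanSpace ℝ (Fin n), (inner ℝ (A x) y : ℝ) = inner ℝ (A y) x := by
    intro x y
    rw [hA, stmt12_inner, stmt12_inner]
    calc Q *ᵥ (WithLp.equiv 2 _ x) ⬝ᵥ (WithLp.equiv 2 _ y)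
        = (WithLp.equiv 2 _ y) ⬝ᵥ Q *ᵥ (WithLp.equiv 2 _ x) := dotProduct_comm _ _
      _ = Matrix.vecMul (WithLp.equiv 2 _ y) Q ⬝ᵥ (WithLp.equiv 2 _ x) :=
          Matrix.dotProduct_mulVec _ _ _
      _ = Q *ᵥ (WithLp.equiv 2 _ y) ⬝ᵥ (WithLp.equiv 2 _ x) := by
          congr 1
          rw [← Matrix.mulVec_transpose, hQT]
  -- key Lyapunov identity
  have hkey : ∀ x : EuclideanSpace ℝ (Fin n),
      (inner ℝ (A (B x)) x : ℝ) + inner ℝ (A x) (B x) = -(η * ‖x‖ ^ 2) := by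
    intro x
    set x' := (WithLp.equiv 2 _ x : Fin n → ℝ) with hx'
    have hBx : (WithLp.equiv 2 _ (B x) : Fin n → ℝ) = F *ᵥ x' := by
      rw [hB]
      rfl
    have h1 : (inner ℝ (A (B x)) x : ℝ) = Q *ᵥ (F *ᵥ x') ⬝ᵥ x' := by
      rw [hA, stmt12_inner, hBx]
    have h2 : (inner ℝ (A x) (B x) : ℝ) = Q *ᵥ x' ⬝ᵥ (F *ᵥ x') := by
      rw [hA, stmt12_inner, hBx]
    have h3 : Q *ᵥ x' ⬝ᵥ (F *ᵥ x') = Fᵀ *ᵥ (Q *ᵥ x') ⬝ᵥ x' := by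
      calc Q *ᵥ x' ⬝ᵥ (F *ᵥ x') = Matrix.vecMul (Q *ᵥ x') F ⬝ᵥ x' :=
            Matrix.dotProduct_mulVec _ _ _
        _ = Fᵀ *ᵥ (Q *ᵥ x') ⬝ᵥ x' := by
            congr 1
            exact (Matrix.mulVec_transpose F _).symm
    have h4 : Q *ᵥ (F *ᵥ x') = (Q * F) *ᵥ x' := (Matrix.mulVec_mulVec _ _ _)
    have h5 : Fᵀ *ᵥ (Q *ᵥ x') = (Fᵀ * Q) *ᵥ x' := (Matrix.mulVec_mulVec _ _ _)
    rw [add_comm, h2, h3, h1, h4, h5, ← add_dotProduct, ← Matrix.add_mulVec, hLyap]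
    have h6 : (-(η • (1 : Matrix (Fin n) (Fin n) ℝ))) *ᵥ x' = -(η • x') := by
      rw [Matrix.neg_mulVec]
      congr 1
      rw [Matrix.smul_mulVec, Matrix.one_mulVec]
    rw [h6]
    have h7 : x' ⬝ᵥ x' = ‖x‖ ^ 2 := stmt12_self_dot x
    simp [neg_dotProduct, smul_dotProduct, h7]
  -- the Lyapunov function
  set e' : ℝ → EuclideanSpace ℝ (Fin n) := fun t => B (e t) + g (e t) + ℓ t with he'
  set V : ℝ → ℝ := fun t => inner ℝ (A (e t)) (e t) with hV
  set V' : ℝ → ℝ := fun t => inner ℝ (A (e t)) (e' t) + inner ℝ (A (e' t)) (e t) with hV'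
  have hVd : ∀ t ∈ Ici (0:ℝ), HasDerivAt V (V' t) t := by
    intro t ht
    have h1 := hdyn t ht
    have h2 : HasDerivAt (fun s => A (e s)) (A (e' t)) t :=
      A.hasFDerivAt.comp_hasDerivAt t h1
    exact HasDerivAt.inner ℝ h2 h1
  have hVnn : ∀ t ∈ Ici (0:ℝ), 0 ≤ V t := by
    intro t _
    have := hc (e t)
    nlinarith [sq_nonneg ‖e t‖]
  have hVle : ∀ t, V t ≤ N * ‖e t‖ ^ 2 := by
    intro t
    have h1 : (inner ℝ (A (e t)) (e t) : ℝ) ≤ ‖A (e t)‖ * ‖e t‖ := real_inner_le_norm _ _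
    have h2 : ‖A (e t)‖ ≤ N * ‖e t‖ := A.le_opNorm _
    have h3 : ‖A (e t)‖ * ‖e t‖ ≤ N * ‖e t‖ * ‖e t‖ :=
      mul_le_mul_of_nonneg_right h2 (norm_nonneg _)
    calc V t ≤ ‖A (e t)‖ * ‖e t‖ := h1
      _ ≤ N * ‖e t‖ * ‖e t‖ := h3
      _ = N * ‖e t‖ ^ 2 := by ring
  have hVb : ∀ t ∈ Ici (0:ℝ), V' t ≤ -a * V t + C * ‖ℓ t‖ ^ 2 := by
    intro t ht
    set x := e t with hx
    set w := g x + ℓ t with hw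
    have hsplit : V' t = -(η * ‖x‖ ^ 2) + 2 * inner ℝ (A x) w := by
      have h1 : e' t = B x + w := by
        show B (e t) + g (e t) + ℓ t = B x + w
        rw [add_assoc]
      have h2 : V' t = inner ℝ (A x) (e' t) + inner ℝ (A (e' t)) x := rfl
      rw [h2, h1, map_add, inner_add_right, inner_add_left]
      have h3 := hkey x
      have h4 := hsym w x
      linarith
    have hwb : ‖w‖ ≤ γ * ‖x‖ + ‖ℓ t‖ := by
      calc ‖w‖ ≤ ‖g x‖ + ‖ℓ t‖ := norm_add_le _ _
        _ ≤ γ * ‖x‖ + ‖ℓ t‖ := by linarith [hg x]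
    have hib : (inner ℝ (A x) w : ℝ) ≤ N * ‖x‖ * (γ * ‖x‖ + ‖ℓ t‖) := by
      calc (inner ℝ (A x) w : ℝ) ≤ ‖A x‖ * ‖w‖ := real_inner_le_norm _ _
        _ ≤ (N * ‖x‖) * (γ * ‖x‖ + ‖ℓ t‖) := by
            apply mul_le_mul (A.le_opNorm x) hwb (norm_nonneg w)
            positivity
        _ = N * ‖x‖ * (γ * ‖x‖ + ‖ℓ t‖) := by ring
    rw [hsplit]
    exact stmt12_arith hσdef hσ ha ha' hC' hib (hVle t)
  -- u → 0
  have hu : Tendsto (fun t => C * ‖ℓ t‖ ^ 2) atTop (nhds 0) := by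
    have h1 : Tendsto (fun t => ‖ℓ t‖) atTop (nhds 0) := by
      simpa using hℓ0.norm
    have h2 : Tendsto (fun t => ‖ℓ t‖ ^ 2) atTop (nhds 0) := by
      simpa using h1.pow 2
    simpa using h2.const_mul C
  have hV0 : Tendsto V atTop (nhds 0) := stmt12_ode ha hVd hVb hVnn hu
  -- conclude
  have hsq : Tendsto (fun t => ‖e t‖ ^ 2) atTop (nhds 0) := by
    apply tendsto_of_tendsto_of_tendsto_of_le_of_le (g := fun _ => (0:ℝ))
      (h := fun t => V t / c) tendsto_const_nhds
    · simpa using hV0.div_const c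
    · intro t; positivity
    · intro t
      show ‖e t‖ ^ 2 ≤ V t / c
      rw [le_div_iff₀ hc0]
      have h6 : c * ‖e t‖ ^ 2 ≤ V t := hc (e t)
      linarith
  have hnrm : Tendsto (fun t => ‖e t‖) atTop (nhds 0) := by
    have h1 : Tendsto (fun t => Real.sqrt (‖e t‖ ^ 2)) atTop (nhds 0) := by
      have h0 := (Real.continuous_sqrt.tendsto 0).comp hsq
      simpa [Function.comp_def] using h0
    have h2 : (fun t => Real.sqrt (‖e t‖ ^ 2)) = fun t => ‖e t‖ := by
      funext t
      exact Real.sqrt_sq (norm_nonneg _)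
    rwa [h2] at h1
  exact tendsto_zero_iff_norm_tendsto_zero.mpr hnrm
end
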